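/- Let d ≥ 1, t > 0, and let Σ ⊆ ℝ^d be a measurable set of finite Lebesgue measure. Let Σ' = { x ∈ ℝ^d : (G_t * 1_Σ)(x) ≥ 1/2 } be the set produced by one step of the Merriman–Bence–Osher threshold dynamics scheme. Then E_t(Σ') ≤ E_t(Σ), i.e., the scheme is unconditionally energy stable. -/

import Mathlib

open MeasureTheory

/-- The Gaussian kernel on `ℝ^d` at time `t`. -/
noncomputable def gaussKer (d : ℕ) (t : ℝ) (x : EuclideanSpace ℝ (Fin d)) : ℝ :=
  (4 * Real.pi * t) ^ (-(d : ℝ) / 2) * Real.exp (-‖x‖ ^ 2 / (4 * t))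

/-- Convolution of the Gaussian kernel on `ℝ^d` with a function. -/
noncomputable def gaussConv (d : ℕ) (t : ℝ) (u : EuclideanSpace ℝ (Fin d) → ℝ)
    (x : EuclideanSpace ℝ (Fin d)) : ℝ :=
  ∫ y : EuclideanSpace ℝ (Fin d), gaussKer d t (x - y) * u y

/-- The threshold-dynamics energy `E_t(Σ) = ∫ (1 − 1_Σ)(G_t * 1_Σ)`. -/
noncomputable def tdEnergy (d : ℕ) (t : ℝ) (S : Set (EuclideanSpace ℝ (Fin d))) : ℝ :=
  ∫ x : EuclideanSpace ℝ (Fin d),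
    (1 - Set.indicator S 1 x) * gaussConv d t (Set.indicator S 1) x

/-! Write `u = 1_Σ`, `u' = 1_Σ'`, `f = u' - u` and `K` for convolution with `G_t`. Since `G_t` is
even and has mass one, `E_t(Σ) = |Σ| - ⟨u, K u⟩` and
`E_t(Σ') - E_t(Σ) = ∫ f (1 - 2 K u) - ⟨f, K f⟩`.
The first term is `≤ 0` pointwise, because `Σ'` is exactly where `1 - 2 K u ≤ 0`; the second is
`≥ 0`, because the semigroup law `G_t = G_{t/2} * G_{t/2}` gives `⟨f, K f⟩ = ‖G_{t/2} * f‖²`.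
So the argument works for any even, integrable, positive semidefinite kernel of mass one. -/

open Real

open scoped ENNReal Convolution

lemma MeasureTheory.MemLp.comp_fst_top {α β : Type*} [MeasurableSpace α] [MeasurableSpace β]
    {μ : Measure α} {f : α → ℝ} (hf : MemLp f ∞ μ) (ν : Measure β) [SFinite ν] :
    MemLp (fun p : α × β ↦ f p.1) ∞ (μ.prod ν) :=
  ⟨hf.1.comp_fst, (eLpNormEssSup_le_of_ae_enorm_bound
    (Measure.quasiMeasurePreserving_fst.ae ae_le_eLpNormEssSup)).trans_lt hf.2⟩

section Indicator

variable {α : Type*} [MeasurableSpace α] {μ : Measure α} {S : Set α}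

lemma memLp_indicator_one (p : ℝ≥0∞) (hS : MeasurableSet S) (hSfin : μ S ≠ ∞) :
    MemLp (S.indicator (1 : α → ℝ)) p μ :=
  memLp_indicator_const p hS 1 (Or.inr hSfin)

lemma integrable_indicator_one (hS : MeasurableSet S) (hSfin : μ S ≠ ∞) :
    Integrable (S.indicator (1 : α → ℝ)) μ :=
  memLp_one_iff_integrable.1 (memLp_indicator_one 1 hS hSfin)

end Indicator

section KernelConv

variable {G : Type*} [AddCommGroup G] [MeasurableSpace G]

-- `gaussConv d t` and `tdEnergy d t` are `kernelConv volume (gaussKer d t)` and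
-- `kernelEnergy volume (gaussKer d t)` by definition.
noncomputable def kernelConv (μ : Measure G) (k u : G → ℝ) (x : G) : ℝ :=
  ∫ y, k (x - y) * u y ∂μ

noncomputable def kernelEnergy (μ : Measure G) (k : G → ℝ) (S : Set G) : ℝ :=
  ∫ x, (1 - S.indicator 1 x) * kernelConv μ k (S.indicator 1) x ∂μ

noncomputable def kernelForm (μ : Measure G) (k f g : G → ℝ) : ℝ :=
  ∫ x, f x * kernelConv μ k g x ∂μ

def IsPosSemidefKernel (μ : Measure G) (k : G → ℝ) : Prop :=
  ∀ f : G → ℝ, Integrable f μ → MemLp f ∞ μ → 0 ≤ kernelForm μ k f f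

variable {μ : Measure G} {k h u v f g : G → ℝ} {S T : Set G}

lemma kernelConv_eq_convolution : kernelConv μ k u = u ⋆[ContinuousLinearMap.mul ℝ ℝ, μ] k := by
  ext x
  simp only [kernelConv, convolution_mul, mul_comm]

variable [MeasurableAdd₂ G] [MeasurableNeg G]

lemma stronglyMeasurable_kernelConv [SFinite μ] (hk : Measurable k) (hu : Measurable u) :
    StronglyMeasurable (kernelConv μ k u) :=
  ((hk.comp measurable_sub).mul (hu.comp measurable_snd)).stronglyMeasurable.integral_prod_right'

variable [μ.IsAddLeftInvariant]

lemma integrable_kernel_mul [μ.IsNegInvariant] (hk : Integrable k μ) (hu : MemLp u ∞ μ) (x : G) :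
    Integrable (fun y ↦ k (x - y) * u y) μ :=
  (hk.comp_sub_left x).mul_of_top_left hu

lemma kernelConv_sub [μ.IsNegInvariant] (hk : Integrable k μ) (hu : MemLp u ∞ μ)
    (hv : MemLp v ∞ μ) : kernelConv μ k (u - v) = kernelConv μ k u - kernelConv μ k v := by
  ext x
  simp only [kernelConv, Pi.sub_apply, mul_sub]
  exact integral_sub (integrable_kernel_mul hk hu x) (integrable_kernel_mul hk hv x)

lemma MeasureTheory.Integrable.kernelConv [SFinite μ] (hu : Integrable u μ) (hk : Integrable k μ) :
    Integrable (kernelConv μ k u) μ := by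
  rw [kernelConv_eq_convolution]
  exact hu.integrable_convolution _ hk

lemma integral_kernelConv [SFinite μ] (hk : Integrable k μ) (hu : Integrable u μ) :
    ∫ x, kernelConv μ k u x ∂μ = (∫ x, k x ∂μ) * ∫ x, u x ∂μ := by
  rw [kernelConv_eq_convolution, integral_convolution _ hu hk, mul_comm]
  rfl

lemma integrable_mul_kernelConv [SFinite μ] (hk : Integrable k μ) (hf : MemLp f ∞ μ)
    (hg : Integrable g μ) : Integrable (fun x ↦ f x * kernelConv μ k g x) μ :=
  (hg.kernelConv hk).mul_of_top_right hf

lemma kernelForm_comm [SFinite μ] (hk_even : ∀ x, k (-x) = k x)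
    (hk : Integrable k μ) (hf : MemLp f ∞ μ) (hg : Integrable g μ) :
    kernelForm μ k f g = kernelForm μ k g f := by
  have hint : Integrable (fun p : G × G ↦ f p.1 * (k (p.1 - p.2) * g p.2)) (μ.prod μ) := by
    have := (hg.convolution_integrand (ContinuousLinearMap.mul ℝ ℝ) hk).mul_of_top_right
      (hf.comp_fst_top μ)
    simpa only [Pi.mul_def, ContinuousLinearMap.mul_apply', mul_comm (g _)] using this
  simp only [kernelForm, kernelConv, ← integral_const_mul]
  rw [integral_integral_swap hint]
  refine integral_congr_ae (Filter.Eventually.of_forall fun y ↦ integral_congr_ae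
    (Filter.Eventually.of_forall fun x ↦ ?_))
  dsimp only
  rw [← neg_sub, hk_even]
  ring

lemma kernelConv_kernelConv_self [SFinite μ] [μ.IsNegInvariant] (hh_even : ∀ x, h (-x) = h x)
    (hh : Integrable h μ) (hf : MemLp f ∞ μ) :
    kernelConv μ (kernelConv μ h h) f = kernelConv μ h (kernelConv μ h f) := by
  ext x
  have hint : Integrable (fun p : G × G ↦ f p.1 * (h (x - p.2) * h (p.1 - p.2))) (μ.prod μ) := by
    have := ((hh.comp_sub_left x).convolution_integrand (ContinuousLinearMap.mul ℝ ℝ) hh)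
      |>.mul_of_top_right (hf.comp_fst_top μ)
    simpa only [Pi.mul_def, ContinuousLinearMap.mul_apply'] using this
  have hh_sub (a b : G) : h (a - b) = h (b - a) := by rw [← neg_sub, hh_even]
  calc kernelConv μ (kernelConv μ h h) f x
      = ∫ y, ∫ z, f y * (h (x - z) * h (y - z)) ∂μ ∂μ := by
        refine integral_congr_ae (Filter.Eventually.of_forall fun y ↦ ?_)
        dsimp only
        rw [kernelConv, ← integral_sub_right_eq_self _ y, ← integral_mul_const]
        simp only [sub_sub_sub_cancel_right, hh_sub _ y]
        congr 1 with z
        ring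
    _ = ∫ z, ∫ y, f y * (h (x - z) * h (y - z)) ∂μ ∂μ := integral_integral_swap hint
    _ = kernelConv μ h (kernelConv μ h f) x := by
        refine integral_congr_ae (Filter.Eventually.of_forall fun z ↦ ?_)
        dsimp only
        rw [kernelConv, ← integral_const_mul]
        simp only [hh_sub _ z]
        congr 1 with y
        ring

lemma isPosSemidefKernel_kernelConv_self [SFinite μ] [μ.IsNegInvariant]
    (hh_even : ∀ x, h (-x) = h x) (hh : Integrable h μ) :
    IsPosSemidefKernel μ (kernelConv μ h h) := by
  intro f hf hf_top
  rw [kernelForm, kernelConv_kernelConv_self hh_even hh hf_top, ← kernelForm,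
    kernelForm_comm hh_even hh hf_top (hf.kernelConv hh)]
  exact integral_nonneg fun x ↦ mul_self_nonneg _

lemma kernelForm_sub_left [SFinite μ] (hk : Integrable k μ) (hu : MemLp u ∞ μ) (hv : MemLp v ∞ μ)
    (hg : Integrable g μ) : kernelForm μ k (u - v) g = kernelForm μ k u g - kernelForm μ k v g := by
  simp only [kernelForm, Pi.sub_apply, sub_mul]
  exact integral_sub (integrable_mul_kernelConv hk hu hg) (integrable_mul_kernelConv hk hv hg)

lemma kernelForm_sub_right [SFinite μ] [μ.IsNegInvariant] (hk : Integrable k μ) (hf : MemLp f ∞ μ)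
    (hu : Integrable u μ) (hu_top : MemLp u ∞ μ) (hv : Integrable v μ) (hv_top : MemLp v ∞ μ) :
    kernelForm μ k f (u - v) = kernelForm μ k f u - kernelForm μ k f v := by
  simp only [kernelForm, kernelConv_sub hk hu_top hv_top, Pi.sub_apply, mul_sub]
  exact integral_sub (integrable_mul_kernelConv hk hf hu) (integrable_mul_kernelConv hk hf hv)

variable [SFinite μ]

lemma kernelEnergy_eq (hk : Integrable k μ) (hS : MeasurableSet S) (hSfin : μ S ≠ ∞) :
    kernelEnergy μ k S =
      (∫ x, k x ∂μ) * μ.real S - kernelForm μ k (S.indicator 1) (S.indicator 1) := by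
  have hu := integrable_indicator_one hS hSfin
  simp only [kernelEnergy, kernelForm, sub_mul, one_mul]
  rw [integral_sub (hu.kernelConv hk)
      (integrable_mul_kernelConv hk (memLp_indicator_one ∞ hS hSfin) hu),
    integral_kernelConv hk hu, integral_indicator_one hS]

variable [μ.IsNegInvariant]

lemma kernelEnergy_sub_kernelEnergy (hk_even : ∀ x, k (-x) = k x) (hk : Integrable k μ)
    (hk_one : ∫ x, k x ∂μ = 1) (hS : MeasurableSet S) (hSfin : μ S ≠ ∞) (hT : MeasurableSet T)
    (hTfin : μ T ≠ ∞) :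
    kernelEnergy μ k T - kernelEnergy μ k S =
      ∫ x, (T.indicator 1 x - S.indicator 1 x) * (1 - 2 * kernelConv μ k (S.indicator 1) x) ∂μ
        - kernelForm μ k (T.indicator 1 - S.indicator 1) (T.indicator 1 - S.indicator 1) := by
  set u : G → ℝ := S.indicator 1
  set v : G → ℝ := T.indicator 1
  have hu : Integrable u μ := integrable_indicator_one hS hSfin
  have hv : Integrable v μ := integrable_indicator_one hT hTfin
  have hu_top : MemLp u ∞ μ := memLp_indicator_one ∞ hS hSfin
  have hv_top : MemLp v ∞ μ := memLp_indicator_one ∞ hT hTfin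
  have hlin : ∫ x, (v x - u x) * (1 - 2 * kernelConv μ k u x) ∂μ
      = μ.real T - μ.real S - 2 * kernelForm μ k (v - u) u := by
    have hint := integrable_mul_kernelConv hk (hv_top.sub hu_top) hu
    calc ∫ x, (v x - u x) * (1 - 2 * kernelConv μ k u x) ∂μ
        = ∫ x, ((v x - u x) - 2 * ((v - u) x * kernelConv μ k u x)) ∂μ := by
          congr 1 with x
          simp only [Pi.sub_apply]
          ring
      _ = μ.real T - μ.real S - 2 * kernelForm μ k (v - u) u := by
          rw [integral_sub (f := fun x ↦ v x - u x) (hv.sub hu) (hint.const_mul 2),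
            integral_sub hv hu, integral_const_mul, integral_indicator_one hT,
            integral_indicator_one hS, kernelForm]
  rw [kernelEnergy_eq hk hT hTfin, kernelEnergy_eq hk hS hSfin, hk_one, hlin,
    kernelForm_sub_left hk hv_top hu_top (hv.sub hu), kernelForm_sub_left hk hv_top hu_top hu,
    kernelForm_sub_right hk hv_top hv hv_top hu hu_top,
    kernelForm_sub_right hk hu_top hv hv_top hu hu_top, kernelForm_comm hk_even hk hu_top hv]
  ring

theorem kernelEnergy_threshold_le (hk_meas : Measurable k) (hk_even : ∀ x, k (-x) = k x)
    (hk : Integrable k μ) (hk_one : ∫ x, k x ∂μ = 1) (hk_psd : IsPosSemidefKernel μ k)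
    (hS : MeasurableSet S) (hSfin : μ S ≠ ∞) :
    kernelEnergy μ k {x | 1 / 2 ≤ kernelConv μ k (S.indicator 1) x} ≤ kernelEnergy μ k S := by
  set u : G → ℝ := S.indicator 1
  set T := {x | 1 / 2 ≤ kernelConv μ k u x}
  have hu : Integrable u μ := integrable_indicator_one hS hSfin
  have hT : MeasurableSet T := measurableSet_le measurable_const
    (stronglyMeasurable_kernelConv hk_meas (measurable_one.indicator hS)).measurable
  have hTfin : μ T ≠ ∞ := by
    refine ne_top_of_le_ne_top ((hu.kernelConv hk).measure_norm_ge_lt_top one_half_pos).ne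
      (measure_mono fun x hx ↦ ?_)
    exact (show 1 / 2 ≤ kernelConv μ k u x from hx).trans (le_abs_self _)
  have hlin : ∫ x, (T.indicator 1 x - u x) * (1 - 2 * kernelConv μ k u x) ∂μ ≤ 0 := by
    refine integral_nonpos fun x ↦ ?_
    have hu0 : 0 ≤ u x := Set.indicator_nonneg (fun _ _ ↦ zero_le_one) x
    have hu1 : u x ≤ 1 := Set.indicator_le_self' (fun _ _ ↦ zero_le_one) x
    by_cases hx : x ∈ T
    · have : 1 / 2 ≤ kernelConv μ k u x := hx
      rw [Set.indicator_of_mem hx]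
      exact mul_nonpos_of_nonneg_of_nonpos (by simpa using hu1) (by linarith)
    · have : kernelConv μ k u x < 1 / 2 := not_le.1 hx
      rw [Set.indicator_of_notMem hx]
      exact mul_nonpos_of_nonpos_of_nonneg (by simpa using hu0) (by linarith)
  have hquad := hk_psd _ ((integrable_indicator_one hT hTfin).sub hu)
    ((memLp_indicator_one ∞ hT hTfin).sub (memLp_indicator_one ∞ hS hSfin))
  linarith [kernelEnergy_sub_kernelEnergy hk_even hk hk_one hS hSfin hT hTfin]

end KernelConv

section Gaussian

variable {d : ℕ} {s t : ℝ}

lemma gaussKer_neg (x : EuclideanSpace ℝ (Fin d)) : gaussKer d t (-x) = gaussKer d t x := by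
  rw [gaussKer, gaussKer, norm_neg]

lemma measurable_gaussKer : Measurable (gaussKer d t) := by
  unfold gaussKer
  fun_prop

lemma integral_exp_neg_mul_sq_norm {b : ℝ} (hb : 0 < b) :
    ∫ x : EuclideanSpace ℝ (Fin d), exp (-b * ‖x‖ ^ 2) = (π / b) ^ ((d : ℝ) / 2) := by
  simpa using GaussianFourier.integral_rexp_neg_mul_sq_norm (V := EuclideanSpace ℝ (Fin d)) hb

lemma gaussKer_eq (x : EuclideanSpace ℝ (Fin d)) :
    gaussKer d t x = (4 * π * t) ^ (-(d : ℝ) / 2) * exp (-(4 * t)⁻¹ * ‖x‖ ^ 2) := by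
  rw [gaussKer, neg_mul, ← div_eq_inv_mul, neg_div, neg_div]

lemma integral_gaussKer (ht : 0 < t) : ∫ x, gaussKer d t x = 1 := by
  simp_rw [gaussKer_eq]
  rw [integral_const_mul, integral_exp_neg_mul_sq_norm (by positivity),
    show π / (4 * t)⁻¹ = 4 * π * t by rw [div_inv_eq_mul]; ring, neg_div, rpow_neg (by positivity),
    inv_mul_cancel₀ (by positivity)]

lemma integrable_gaussKer (ht : 0 < t) : Integrable (gaussKer d t) :=
  Integrable.of_integral_ne_zero (by rw [integral_gaussKer ht]; exact one_ne_zero)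

/-- Completing the square: `‖w - y‖² + ‖y‖² = 2 ‖y - w / 2‖² + ‖w‖² / 2`. -/
lemma gaussKer_sub_mul_gaussKer (hs : 0 < s) (w y : EuclideanSpace ℝ (Fin d)) :
    gaussKer d s (w - y) * gaussKer d s y =
      (4 * π * s) ^ (-(d : ℝ) / 2) * (4 * π * s) ^ (-(d : ℝ) / 2) * exp (-‖w‖ ^ 2 / (8 * s)) *
        exp (-(2 * s)⁻¹ * ‖y - (2 : ℝ)⁻¹ • w‖ ^ 2) := by
  have hpar : ‖y‖ ^ 2 + ‖y - w‖ ^ 2 = 2 * (‖y - (2 : ℝ)⁻¹ • w‖ ^ 2 + ‖(2 : ℝ)⁻¹ • w‖ ^ 2) := by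
    convert parallelogram_law_with_norm ℝ (y - (2 : ℝ)⁻¹ • w) ((2 : ℝ)⁻¹ • w) using 3 <;>
      congr 1 <;> module
  rw [norm_smul, norm_sub_rev] at hpar
  have hexp : -‖w - y‖ ^ 2 / (4 * s) + -‖y‖ ^ 2 / (4 * s)
      = -‖w‖ ^ 2 / (8 * s) + -(2 * s)⁻¹ * ‖y - (2 : ℝ)⁻¹ • w‖ ^ 2 := by
    field_simp
    norm_num at hpar
    linarith
  rw [gaussKer, gaussKer, mul_mul_mul_comm, ← exp_add, hexp, exp_add]
  ring

lemma kernelConv_gaussKer_self (hs : 0 < s) :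
    kernelConv volume (gaussKer d s) (gaussKer d s) = gaussKer d (2 * s) := by
  ext w
  simp_rw [kernelConv, gaussKer_sub_mul_gaussKer hs]
  rw [integral_const_mul, integral_sub_right_eq_self (fun y ↦ exp (-(2 * s)⁻¹ * ‖y‖ ^ 2)),
    integral_exp_neg_mul_sq_norm (by positivity), gaussKer]
  have hconst : (4 * π * s) ^ (-(d : ℝ) / 2) * (4 * π * s) ^ (-(d : ℝ) / 2)
      * (π / (2 * s)⁻¹) ^ ((d : ℝ) / 2) = (4 * π * (2 * s)) ^ (-(d : ℝ) / 2) := by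
    have h8 : 4 * π * (2 * s) = 4 * π * s * (4 * π * s) / (2 * π * s) := by
      field_simp
      ring
    rw [show π / (2 * s)⁻¹ = 2 * π * s by rw [div_inv_eq_mul]; ring, h8,
      div_rpow (x := 4 * π * s * (4 * π * s)) (by positivity) (by positivity),
      mul_rpow (x := 4 * π * s) (y := 4 * π * s) (by positivity) (by positivity), neg_div,
      rpow_neg (x := 2 * π * s) (by positivity), div_inv_eq_mul]
  rw [← hconst, show 4 * (2 * s) = 8 * s by ring]
  ring

lemma isPosSemidefKernel_gaussKer (ht : 0 < t) : IsPosSemidefKernel volume (gaussKer d t) := by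
  have h := kernelConv_gaussKer_self (d := d) (half_pos ht)
  rw [mul_div_cancel₀ t two_ne_zero] at h
  exact h ▸ isPosSemidefKernel_kernelConv_self gaussKer_neg (integrable_gaussKer (half_pos ht))

end Gaussian

theorem mbo_unconditionally_energy_stable_general (d : ℕ) (t : ℝ) (ht : 0 < t)
    (S : Set (EuclideanSpace ℝ (Fin d))) (hSmeas : MeasurableSet S)
    (hSfin : volume S < ⊤)
    (S' : Set (EuclideanSpace ℝ (Fin d)))
    (hS' : S' = {x : EuclideanSpace ℝ (Fin d) | 1 / 2 ≤ gaussConv d t (Set.indicator S 1) x}) :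
    tdEnergy d t S' ≤ tdEnergy d t S := by
  subst hS'
  exact kernelEnergy_threshold_le measurable_gaussKer gaussKer_neg (integrable_gaussKer ht)
    (integral_gaussKer ht) (isPosSemidefKernel_gaussKer ht) hSmeas hSfin.ne

/-- One step of the MBO threshold dynamics scheme does not increase the
threshold-dynamics energy: the scheme is unconditionally energy stable. -/
theorem mbo_unconditionally_energy_stable (d : ℕ) (hd : 1 ≤ d) (t : ℝ) (ht : 0 < t)
    (S : Set (EuclideanSpace ℝ (Fin d))) (hSmeas : MeasurableSet S)
    (hSfin : volume S < ⊤)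
    (S' : Set (EuclideanSpace ℝ (Fin d)))
    (hS' : S' = {x : EuclideanSpace ℝ (Fin d) | 1 / 2 ≤ gaussConv d t (Set.indicator S 1) x}) :
    tdEnergy d t S' ≤ tdEnergy d t S :=
  mbo_unconditionally_energy_stable_general d t ht S hSmeas hSfin S' hS'
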